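/- arXiv:1707.00689 — 4 statements merged into one kernel-verified Lean document; each statement's English description precedes it below -/
import Mathlib

section
/- Let A be a (possibly noncommutative) unital ring and let x, y ∈ A satisfy yx − xy = 1. Then for every n ≥ 1 one has x^n y^n = (xy)(xy − 1)(xy − 2)⋯(xy − (n−1)), i.e. x^n y^n = ∏_{k=0}^{n−1}(xy − k·1) (the factors xy − k·1 pairwise commute). -/
/-!
From `y * x = x * y + 1` one gets `(x * y) * y = y * (x * y - 1)`, so `x * y` is shifted by one
each time it moves to the right past a `y`. Hence `x ^ (n + 1) * y ^ (n + 1) = x ^ n * (x * y) * y ^ n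
= x ^ n * y ^ n * (x * y - n)`, and the product formula follows by induction on `n`.
-/

section

variable {R : Type*} [Ring R]

theorem commute_sub_natCast_sub_natCast (a : R) (k l : ℕ) :
    Commute (a - k) (a - l) :=
  ((Commute.refl a).sub_right (Nat.commute_cast a l)).sub_left
    ((Nat.cast_commute k a).sub_right (Nat.cast_commute k (l : R)))

theorem mul_pow_eq_pow_mul_sub_natCast {a y : R} (h : a * y = y * (a - 1)) (n : ℕ) :
    a * y ^ n = y ^ n * (a - n) := by
  induction n with
  | zero => simp
  | succ n ih =>
    calc a * y ^ (n + 1) = y ^ n * ((a - n) * y) := by rw [pow_succ, ← mul_assoc, ih, mul_assoc]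
      _ = y ^ n * (y * (a - 1) - n * y) := by rw [sub_mul, h]
      _ = y ^ (n + 1) * (a - (n + 1 : ℕ)) := by
        rw [(Nat.cast_commute n y).eq, pow_succ, mul_assoc]
        push_cast
        noncomm_ring

variable {x y : R}

theorem mul_mul_eq_mul_mul_sub_one (h : y * x - x * y = 1) : x * y * y = y * (x * y - 1) := by
  rw [sub_eq_iff_eq_add] at h
  rw [mul_sub, ← mul_assoc, h]
  noncomm_ring

theorem pow_mul_pow_eq_prod_mul_sub_natCast (h : y * x - x * y = 1) (n : ℕ) :
    x ^ n * y ^ n = ((List.range n).map fun k : ℕ => x * y - (k : R)).prod := by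
  induction n with
  | zero => simp
  | succ n ih =>
    calc x ^ (n + 1) * y ^ (n + 1) = x ^ n * (x * y * y ^ n) := by
          rw [pow_succ, pow_succ']; noncomm_ring
      _ = x ^ n * y ^ n * (x * y - n) := by
          rw [mul_pow_eq_pow_mul_sub_natCast (mul_mul_eq_mul_mul_sub_one h), mul_assoc]
      _ = _ := by simp [List.range_succ, ih]

end

theorem xn_yn_eq_prod_general {A : Type*} [Ring A] (x y : A) (h : y * x - x * y = 1)
    (n : ℕ) :
    (∀ k l : ℕ, Commute (x * y - (k : A)) (x * y - (l : A))) ∧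
    x ^ n * y ^ n = ((List.range n).map fun k : ℕ => x * y - (k : A)).prod :=
  ⟨commute_sub_natCast_sub_natCast (x * y), pow_mul_pow_eq_prod_mul_sub_natCast h n⟩

/-- Let `A` be a (possibly noncommutative) unital ring and `x, y ∈ A` with `yx − xy = 1`.
Then for every `n ≥ 1`, `x^n y^n = (xy)(xy − 1)(xy − 2) ⋯ (xy − (n−1))`; the factors
`xy − k·1` pairwise commute, so the product (taken here in the order `k = 0, 1, …, n−1`)
is unambiguous. -/
theorem xn_yn_eq_prod {A : Type*} [Ring A] (x y : A) (h : y * x - x * y = 1)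
    (n : ℕ) (hn : 1 ≤ n) :
    (∀ k l : ℕ, Commute (x * y - (k : A)) (x * y - (l : A))) ∧
    x ^ n * y ^ n = ((List.range n).map fun k : ℕ => x * y - (k : A)).prod :=
  xn_yn_eq_prod_general x y h n
end

section
/- Let K be a field of characteristic p > 0 and let a, b ∈ K with b ≠ 0. Let A_{[ab,b)} be the K-algebra presented by generators z, u and relations z^p − z = ab, u^p = b, uz = zu + u, and let A_{((a,b))} be the K-algebra presented by generators x, y and relations x^p = a, y^p = b, yx − xy = 1 (each presented algebra being the quotient of the free K-algebra on the listed generators by the two-sided ideal generated by the listed relations). Then the assignment z ↦ xy, u ↦ y extends to a K-algebra isomorphism A_{[ab,b)} → A_{((a,b))}. -/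
/-!
If `y x = x y + 1`, then `x ^ n * y ^ n = (x y) (x y - 1) ⋯ (x y - n + 1)`, and in characteristic
`p` this product is `(x y) ^ p - x y` for `n = p`, since `∏ i < p, (X - i) = X ^ p - X` over
`ZMod p`. Hence `z = x y`, `u = y` satisfy the relations of `A_{[ab,b)}`. Conversely, in
`A_{[ab,b)}` the element `x = b⁻¹ z u ^ (p - 1)` satisfies `x u = z` and `u x = x u + 1`, so the
same identity gives `x ^ p b = z ^ p - z = a b`, i.e. `x ^ p = a`. The two resulting algebra maps
are inverse to each other on generators.
-/

noncomputable section

variable (K : Type*) [Field K] (p : ℕ) (a b : K)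

/-- The relations `z^p − z = ab`, `u^p = b`, `uz = zu + u` defining `A_{[ab,b)_p}`,
with `z` the first and `u` the second generator of the free algebra. -/
inductive RelAS (K : Type*) [Field K] (p : ℕ) (a b : K) :
    FreeAlgebra K (Fin 2) → FreeAlgebra K (Fin 2) → Prop
  | zrel : RelAS K p a b (FreeAlgebra.ι K (0 : Fin 2) ^ p - FreeAlgebra.ι K (0 : Fin 2))
      (algebraMap K (FreeAlgebra K (Fin 2)) (a * b))
  | urel : RelAS K p a b (FreeAlgebra.ι K (1 : Fin 2) ^ p)
      (algebraMap K (FreeAlgebra K (Fin 2)) b)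
  | uzrel : RelAS K p a b (FreeAlgebra.ι K (1 : Fin 2) * FreeAlgebra.ι K (0 : Fin 2))
      (FreeAlgebra.ι K (0 : Fin 2) * FreeAlgebra.ι K (1 : Fin 2) + FreeAlgebra.ι K (1 : Fin 2))

/-- The algebra `A_{[ab,b)_p} = K⟨z, u ∣ z^p − z = ab, u^p = b, uz = zu + u⟩`. -/
abbrev AAS : Type _ := RingQuot (RelAS K p a b)

/-- The relations `x^p = a`, `y^p = b`, `yx − xy = 1` defining `A_{((a,b))_p}`,
with `x` the first and `y` the second generator of the free algebra. -/
inductive RelW (K : Type*) [Field K] (p : ℕ) (a b : K) :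
    FreeAlgebra K (Fin 2) → FreeAlgebra K (Fin 2) → Prop
  | xrel : RelW K p a b (FreeAlgebra.ι K (0 : Fin 2) ^ p)
      (algebraMap K (FreeAlgebra K (Fin 2)) a)
  | yrel : RelW K p a b (FreeAlgebra.ι K (1 : Fin 2) ^ p)
      (algebraMap K (FreeAlgebra K (Fin 2)) b)
  | yxrel : RelW K p a b (FreeAlgebra.ι K (1 : Fin 2) * FreeAlgebra.ι K (0 : Fin 2))
      (FreeAlgebra.ι K (0 : Fin 2) * FreeAlgebra.ι K (1 : Fin 2) + 1)

/-- The algebra `A_{((a,b))_p} = K⟨x, y ∣ x^p = a, y^p = b, [y,x] = 1⟩`. -/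
abbrev AW : Type _ := RingQuot (RelW K p a b)

open Polynomial

theorem descPochhammer_eq_X_pow_sub_X (R : Type*) [Ring R] (p : ℕ) [Fact p.Prime] [CharP R p] :
    descPochhammer R p = X ^ p - X := by
  have hp : 1 < p := (Fact.out : p.Prime).one_lt
  suffices h : descPochhammer (ZMod p) p = X ^ p - X by
    simpa using congrArg (Polynomial.map (ZMod.castHom dvd_rfl R)) h
  have hmonic : (X ^ p - X : (ZMod p)[X]).Monic :=
    monic_X_pow_sub (by rw [degree_X]; exact_mod_cast hp)
  refine Polynomial.eq_of_degree_le_of_eval_finset_eq Finset.univ ?_ ?_ ?_ ?_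
  · rw [degree_eq_natDegree (monic_descPochhammer _ p).ne_zero, descPochhammer_natDegree,
      Finset.card_univ, ZMod.card]
  · rw [degree_eq_natDegree (monic_descPochhammer _ p).ne_zero, descPochhammer_natDegree,
      degree_eq_natDegree hmonic.ne_zero, FiniteField.X_pow_card_sub_X_natDegree_eq _ hp]
  · rw [(monic_descPochhammer _ p).leadingCoeff, hmonic.leadingCoeff]
  · intro c _
    rw [← ZMod.natCast_zmod_val c, descPochhammer_eval_coe_nat_of_lt (ZMod.val_lt c)]
    simp [ZMod.pow_card]

section WeylRelation

variable {K A : Type*} [Field K] [Ring A] [Algebra K A] {x y : A}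

theorem mul_mul_pow_of_mul_eq_mul_add_one (h : y * x = x * y + 1) (n : ℕ) :
    x * y * y ^ n = y ^ n * (x * y - n) := by
  have hstep : x * y * y = y * (x * y - 1) := by
    rw [mul_sub, ← mul_assoc, h]; noncomm_ring
  induction n with
  | zero => simp
  | succ n ih =>
    calc x * y * y ^ (n + 1) = y ^ n * (x * y * y - n * y) := by
          rw [pow_succ, ← mul_assoc, ih]; noncomm_ring
      _ = y ^ (n + 1) * (x * y - (n + 1 : ℕ)) := by
          rw [hstep, (Nat.cast_commute n y).eq, pow_succ]; push_cast; noncomm_ring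

theorem pow_mul_pow_eq_aeval_descPochhammer (h : y * x = x * y + 1) (n : ℕ) :
    x ^ n * y ^ n = aeval (x * y) (descPochhammer K n) := by
  induction n with
  | zero => simp
  | succ n ih =>
    calc x ^ (n + 1) * y ^ (n + 1) = x ^ n * (x * y * y ^ n) := by
          rw [pow_succ, pow_succ', mul_assoc, ← mul_assoc x]
      _ = aeval (x * y) (descPochhammer K (n + 1)) := by
          rw [mul_mul_pow_of_mul_eq_mul_add_one h, ← mul_assoc, ih, descPochhammer_succ_right]
          simp

theorem pow_mul_pow_eq_mul_pow_sub (p : ℕ) [Fact p.Prime] [CharP K p] (h : y * x = x * y + 1) :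
    x ^ p * y ^ p = (x * y) ^ p - x * y := by
  rw [pow_mul_pow_eq_aeval_descPochhammer (K := K) h, descPochhammer_eq_X_pow_sub_X]
  simp

end WeylRelation

section InverseOfGenerator

variable {K A : Type*} [Field K] [Ring A] [Algebra K A] {z u : A} {b : K} {n : ℕ}

theorem inv_smul_mul_pow_eq (hb : b ≠ 0) (hu : u ^ n = algebraMap K A b) (w : A) :
    b⁻¹ • (w * u ^ n) = w := by
  rw [hu, ← Algebra.commutes, ← Algebra.smul_def, inv_smul_smul₀ hb]

theorem inv_smul_mul_pow_mul_eq (hb : b ≠ 0) (hu : u ^ (n + 1) = algebraMap K A b) :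
    b⁻¹ • (z * u ^ n) * u = z := by
  rw [smul_mul_assoc, mul_assoc, ← pow_succ, inv_smul_mul_pow_eq hb hu]

theorem mul_inv_smul_mul_pow_eq (hb : b ≠ 0) (hu : u ^ (n + 1) = algebraMap K A b)
    (huz : u * z = z * u + u) :
    u * (b⁻¹ • (z * u ^ n)) = b⁻¹ • (z * u ^ n) * u + 1 := by
  rw [inv_smul_mul_pow_mul_eq hb hu, mul_smul_comm, ← mul_assoc, huz, add_mul, mul_assoc,
    ← pow_succ', hu, smul_add, ← Algebra.commutes, ← Algebra.smul_def, inv_smul_smul₀ hb,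
    Algebra.algebraMap_eq_smul_one, inv_smul_smul₀ hb]

end InverseOfGenerator

namespace AAS

variable {K p a b} {B : Type*} [Ring B] [Algebra K B]

def z : AAS K p a b := RingQuot.mkAlgHom K (RelAS K p a b) (FreeAlgebra.ι K 0)

def u : AAS K p a b := RingQuot.mkAlgHom K (RelAS K p a b) (FreeAlgebra.ι K 1)

theorem z_pow_sub_z : (z : AAS K p a b) ^ p - z = algebraMap K _ (a * b) := by
  rw [z, ← map_pow, ← map_sub, RingQuot.mkAlgHom_rel K RelAS.zrel, AlgHom.commutes]

theorem u_pow : (u : AAS K p a b) ^ p = algebraMap K _ b := by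
  rw [u, ← map_pow, RingQuot.mkAlgHom_rel K RelAS.urel, AlgHom.commutes]

theorem u_mul_z : (u : AAS K p a b) * z = z * u + u := by
  rw [u, z, ← map_mul, RingQuot.mkAlgHom_rel K RelAS.uzrel, map_add, map_mul]

def lift (z' u' : B) (hz : z' ^ p - z' = algebraMap K B (a * b)) (hu : u' ^ p = algebraMap K B b)
    (huz : u' * z' = z' * u' + u') : AAS K p a b →ₐ[K] B :=
  RingQuot.liftAlgHom K ⟨FreeAlgebra.lift K ![z', u'], by
    rintro _ _ (_ | _ | _)
    · simpa using hz
    · simpa using hu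
    · simpa using huz⟩

@[simp]
theorem lift_z (z' u' : B) (hz hu huz) : lift z' u' hz hu huz (z : AAS K p a b) = z' := by
  simp [lift, z]

@[simp]
theorem lift_u (z' u' : B) (hz hu huz) : lift z' u' hz hu huz (u : AAS K p a b) = u' := by
  simp [lift, u]

theorem algHom_ext {f g : AAS K p a b →ₐ[K] B} (hz : f z = g z) (hu : f u = g u) : f = g :=
  RingQuot.ringQuot_ext' K _ _ <| FreeAlgebra.hom_ext <| funext fun i => by
    fin_cases i
    exacts [hz, hu]

-- Since `y ^ p = b`, the element `x` equals `b⁻¹ (x y) y ^ (p - 1)`.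
def x : AAS K p a b := b⁻¹ • (z * u ^ (p - 1))

variable [hp : Fact p.Prime]

theorem u_pow_pred_succ : (u : AAS K p a b) ^ (p - 1 + 1) = algebraMap K _ b := by
  rw [Nat.sub_add_cancel hp.out.one_le, u_pow]

theorem x_mul_u (hb : b ≠ 0) : (x : AAS K p a b) * u = z :=
  inv_smul_mul_pow_mul_eq hb u_pow_pred_succ

theorem u_mul_x (hb : b ≠ 0) : (u : AAS K p a b) * x = x * u + 1 :=
  mul_inv_smul_mul_pow_eq hb u_pow_pred_succ u_mul_z

theorem x_pow [CharP K p] (hb : b ≠ 0) : (x : AAS K p a b) ^ p = algebraMap K _ a := by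
  have h := pow_mul_pow_eq_mul_pow_sub (K := K) p (u_mul_x (p := p) (a := a) hb)
  rw [x_mul_u hb, z_pow_sub_z, u_pow, map_mul] at h
  exact ((isUnit_iff_ne_zero.mpr hb).map (algebraMap K _)).mul_left_injective h

end AAS

namespace AW

variable {K p a b} {B : Type*} [Ring B] [Algebra K B]

def x : AW K p a b := RingQuot.mkAlgHom K (RelW K p a b) (FreeAlgebra.ι K 0)

def y : AW K p a b := RingQuot.mkAlgHom K (RelW K p a b) (FreeAlgebra.ι K 1)

theorem x_pow : (x : AW K p a b) ^ p = algebraMap K _ a := by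
  rw [x, ← map_pow, RingQuot.mkAlgHom_rel K RelW.xrel, AlgHom.commutes]

theorem y_pow : (y : AW K p a b) ^ p = algebraMap K _ b := by
  rw [y, ← map_pow, RingQuot.mkAlgHom_rel K RelW.yrel, AlgHom.commutes]

theorem y_mul_x : (y : AW K p a b) * x = x * y + 1 := by
  rw [y, x, ← map_mul, RingQuot.mkAlgHom_rel K RelW.yxrel, map_add, map_mul, map_one]

def lift (x' y' : B) (hx : x' ^ p = algebraMap K B a) (hy : y' ^ p = algebraMap K B b)
    (hyx : y' * x' = x' * y' + 1) : AW K p a b →ₐ[K] B :=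
  RingQuot.liftAlgHom K ⟨FreeAlgebra.lift K ![x', y'], by
    rintro _ _ (_ | _ | _)
    · simpa using hx
    · simpa using hy
    · simpa using hyx⟩

@[simp]
theorem lift_x (x' y' : B) (hx hy hyx) : lift x' y' hx hy hyx (x : AW K p a b) = x' := by
  simp [lift, x]

@[simp]
theorem lift_y (x' y' : B) (hx hy hyx) : lift x' y' hx hy hyx (y : AW K p a b) = y' := by
  simp [lift, y]

theorem algHom_ext {f g : AW K p a b →ₐ[K] B} (hx : f x = g x) (hy : f y = g y) : f = g :=
  RingQuot.ringQuot_ext' K _ _ <| FreeAlgebra.hom_ext <| funext fun i => by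
    fin_cases i
    exacts [hx, hy]

theorem y_mul_xy : (y : AW K p a b) * (x * y) = x * y * y + y := by
  rw [← mul_assoc, y_mul_x, add_mul, one_mul]

variable [hp : Fact p.Prime]

theorem y_pow_pred_succ : (y : AW K p a b) ^ (p - 1 + 1) = algebraMap K _ b := by
  rw [Nat.sub_add_cancel hp.out.one_le, y_pow]

theorem xy_pow_sub_xy [CharP K p] :
    ((x : AW K p a b) * y) ^ p - x * y = algebraMap K _ (a * b) := by
  rw [← pow_mul_pow_eq_mul_pow_sub (K := K) p y_mul_x, x_pow, y_pow, map_mul]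

end AW

/-- Let `K` be a field of characteristic `p > 0` and `a, b ∈ K`, `b ≠ 0`. Then the
assignment `z ↦ xy`, `u ↦ y` extends to a `K`-algebra isomorphism
`A_{[ab,b)_p} → A_{((a,b))_p}`. -/
theorem symbolAlgebra_iso [hp : Fact p.Prime] [CharP K p] (hb : b ≠ 0) :
    ∃ f : AAS K p a b ≃ₐ[K] AW K p a b,
      f (RingQuot.mkAlgHom K (RelAS K p a b) (FreeAlgebra.ι K (0 : Fin 2))) =
        RingQuot.mkAlgHom K (RelW K p a b) (FreeAlgebra.ι K (0 : Fin 2)) *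
          RingQuot.mkAlgHom K (RelW K p a b) (FreeAlgebra.ι K (1 : Fin 2)) ∧
      f (RingQuot.mkAlgHom K (RelAS K p a b) (FreeAlgebra.ι K (1 : Fin 2))) =
        RingQuot.mkAlgHom K (RelW K p a b) (FreeAlgebra.ι K (1 : Fin 2)) := by
  let φ : AAS K p a b →ₐ[K] AW K p a b :=
    AAS.lift (AW.x * AW.y) AW.y AW.xy_pow_sub_xy AW.y_pow AW.y_mul_xy
  let ψ : AW K p a b →ₐ[K] AAS K p a b :=
    AW.lift AAS.x AAS.u (AAS.x_pow hb) AAS.u_pow (AAS.u_mul_x hb)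
  have hφψ : φ.comp ψ = AlgHom.id K _ := by
    refine AW.algHom_ext ?_ (by simp [φ, ψ])
    simp only [φ, ψ, AlgHom.comp_apply, AW.lift_x, AAS.x, map_smul, map_mul, map_pow, AAS.lift_z,
      AAS.lift_u, AlgHom.id_apply, mul_assoc, ← pow_succ']
    exact inv_smul_mul_pow_eq hb AW.y_pow_pred_succ _
  have hψφ : ψ.comp φ = AlgHom.id K _ :=
    AAS.algHom_ext (by simp [φ, ψ, AAS.x_mul_u hb]) (by simp [φ, ψ])
  exact ⟨AlgEquiv.ofAlgHom φ ψ hφψ hψφ, AAS.lift_z .., AAS.lift_u ..⟩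

end
end

section
/- Let R be a commutative ring and C an R-algebra generated by elements x_1,…,x_m and y_1,…,y_n such that the x_i pairwise commute, the y_j pairwise commute, and for all i, j the commutator [y_j, x_i] = y_j x_i − x_i y_j lies in the R-subalgebra of C generated by x_1,…,x_{i−1}, y_1,…,y_{j−1}. Then: (1) C is spanned as an R-module by the ordered monomials x_1^{a_1}⋯x_m^{a_m} y_1^{b_1}⋯y_n^{b_n} (a_q, b_r ∈ ℕ); and (2) for each i, j there exists a polynomial c_{i,j} ∈ R[X_1,…,X_{i−1}][Y_1,…,Y_{j−1}] (commuting variables) such that [y_j, x_i] = c_{i,j}(x_1,…,x_{i−1}, y_1,…,y_{j−1}). -/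
/-!
Write `X_I` and `Y_J` for the subalgebras generated by the `x i` with `i ∈ I` and by the
`y j` with `j ∈ J`. For lower sets `I`, `J` the subalgebra generated by all these elements is,
as a submodule, the product `X_I * Y_J`. The heart of the matter is `y j * X_I ⊆ X_I * Y_{≤ j}`,
proved by well-founded induction on `j`: moving `y j` past a generator `x i` gives `x i * y j`
plus the commutator, which lies in `X_{<i} * Y_{<j}` by induction, and `Y_{<j} * X_I` is again
contained in `X_I * Y_{<j}` by induction. Since the `x i` commute, `X_I` is spanned by the
ordered monomials in the `x i`, and likewise for `Y_J`; this gives both the spanning set and,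
reading off coefficients, the polynomials `c_{i,j}`.
-/

noncomputable section

/-- The product `∏ i, x i ^ e i` over the support of `e`, with factors multiplied in
increasing order of the index. -/
def ordProd {σ M : Type*} [LinearOrder σ] [Monoid M] (x : σ → M) (e : σ →₀ ℕ) : M :=
  ((e.support.sort (· ≤ ·)).map fun i => x i ^ e i).prod

/-- Evaluation of a multivariate polynomial in a (possibly noncommutative) algebra:
each monomial is evaluated as the ordered product of the powers of the substituted
values, the variables being multiplied in increasing order of their (linearly ordered)
index.  For the lexicographic sum `Fin m ⊕ₗ Fin n` this multiplies all `X`-values (in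
increasing order of the index) to the left of all `Y`-values (in increasing order of
the index), which is the evaluation of a polynomial in `R[X_1,…,X_m][Y_1,…,Y_n]`. -/
def pEval {σ R A : Type*} [LinearOrder σ] [CommSemiring R] [Semiring A] [Algebra R A]
    (x : σ → A) (q : MvPolynomial σ R) : A :=
  q.support.sum fun e => MvPolynomial.coeff e q • ordProd x e

open Set Subalgebra Algebra

theorem Algebra.mul_mem_of_mem_adjoin {R A : Type*} [CommSemiring R] [Semiring A] [Algebra R A]
    {S : Set A} {N : Submodule R A} (hS : ∀ s ∈ S, ∀ a ∈ N, s * a ∈ N) {b : A}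
    (hb : b ∈ adjoin R S) {a : A} (ha : a ∈ N) : b * a ∈ N := by
  induction hb using Algebra.adjoin_induction generalizing a with
  | mem s hs => exact hS s hs a ha
  | algebraMap r => rw [← Algebra.smul_def]; exact N.smul_mem r ha
  | add b c _ _ hb hc => rw [add_mul]; exact add_mem (hb ha) (hc ha)
  | mul b c _ _ hb hc => rw [mul_assoc]; exact hb (hc ha)

section OrderedSpan

variable {R A ι κ : Type*} [CommSemiring R] [Ring A] [Algebra R A]

variable (R) in
/-- `X_I * Y_J`; when the `x i` commute and the `y j` commute, this is the span of the ordered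
monomials with exponents supported in `I` and `J`. -/
def orderedSpan (x : ι → A) (y : κ → A) (I : Set ι) (J : Set κ) : Submodule R A :=
  toSubmodule (adjoin R (x '' I)) * toSubmodule (adjoin R (y '' J))

variable {x : ι → A} {y : κ → A} {I I' : Set ι} {J J' : Set κ}

theorem mem_orderedSpan_of_mem_adjoin_right {b : A} (hb : b ∈ adjoin R (y '' J)) :
    b ∈ orderedSpan R x y I J := by
  simpa [orderedSpan] using Submodule.mul_mem_mul (M := toSubmodule (adjoin R (x '' I)))
    (N := toSubmodule (adjoin R (y '' J))) (adjoin R (x '' I)).one_mem hb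

theorem orderedSpan_mono (hI : I ⊆ I') (hJ : J ⊆ J') :
    orderedSpan R x y I J ≤ orderedSpan R x y I' J' :=
  mul_le_mul' (adjoin_mono (image_mono hI)) (adjoin_mono (image_mono hJ))

theorem mul_mem_orderedSpan_left {a z : A} (ha : a ∈ adjoin R (x '' I))
    (hz : z ∈ orderedSpan R x y I J) : a * z ∈ orderedSpan R x y I J := by
  have := Submodule.mul_mem_mul (M := toSubmodule (adjoin R (x '' I))) ha hz
  rwa [orderedSpan, ← mul_assoc, (isIdempotentElem_toSubmodule _).eq] at this

theorem mul_mem_orderedSpan_right {z b : A} (hz : z ∈ orderedSpan R x y I J)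
    (hb : b ∈ adjoin R (y '' J)) : z * b ∈ orderedSpan R x y I J := by
  have := Submodule.mul_mem_mul (N := toSubmodule (adjoin R (y '' J))) hz hb
  rwa [orderedSpan, mul_assoc, (isIdempotentElem_toSubmodule _).eq] at this

variable [Preorder κ]

theorem mem_orderedSpan_of_mem_adjoin_union (hJ : IsLowerSet J)
    (hy : ∀ j ∈ J, ∀ a ∈ adjoin R (x '' I), y j * a ∈ orderedSpan R x y I (Iic j)) {z : A}
    (hz : z ∈ adjoin R (x '' I ∪ y '' J)) : z ∈ orderedSpan R x y I J := by
  have hgen : ∀ s ∈ x '' I ∪ y '' J, ∀ a ∈ orderedSpan R x y I J,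
      s * a ∈ orderedSpan R x y I J := by
    rintro _ (⟨i, hi, rfl⟩ | ⟨j, hj, rfl⟩) a ha
    · exact mul_mem_orderedSpan_left (subset_adjoin ⟨i, hi, rfl⟩) ha
    · induction ha using Submodule.mul_induction_on' with
      | mem_mul_mem p hp q hq =>
        rw [← mul_assoc]
        exact mul_mem_orderedSpan_right
          (orderedSpan_mono subset_rfl (hJ.Iic_subset hj) (hy j hj p hp)) hq
      | add a _ b _ ha hb => rw [mul_add]; exact add_mem ha hb
  simpa using mul_mem_of_mem_adjoin hgen hz (mem_orderedSpan_of_mem_adjoin_right (one_mem _))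

variable [Preorder ι] [WellFoundedLT κ]

theorem mul_mem_orderedSpan_Iic
    (hcom : ∀ i j, y j * x i - x i * y j ∈ adjoin R (x '' Iio i ∪ y '' Iio j)) (j : κ)
    (hI : IsLowerSet I) {a : A} (ha : a ∈ adjoin R (x '' I)) :
    y j * a ∈ orderedSpan R x y I (Iic j) := by
  induction j using WellFoundedLT.induction generalizing I a with
  | _ j IH =>
  have reorder : ∀ {I' : Set ι}, IsLowerSet I' → ∀ {z : A},
      z ∈ adjoin R (x '' I' ∪ y '' Iio j) → z ∈ orderedSpan R x y I' (Iio j) :=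
    fun hI' _ hz => mem_orderedSpan_of_mem_adjoin_union (isLowerSet_Iio j)
      (fun j' hj' _ ha' => IH j' hj' hI' ha') hz
  rw [← mem_toSubmodule, adjoin_eq_span] at ha
  induction ha using Submodule.span_induction with
  | mem a ha =>
    induction ha using Submonoid.closure_induction_left with
    | one =>
      rw [mul_one]
      exact mem_orderedSpan_of_mem_adjoin_right
        (subset_adjoin (mem_image_of_mem y (le_refl j)))
    | mul_left _ hxi a ha ih =>
      obtain ⟨i, hi, rfl⟩ := hxi
      have ha' : a ∈ adjoin R (x '' I) := Submonoid.closure_le.2 subset_adjoin ha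
      rw [show y j * (x i * a) = x i * (y j * a) + (y j * x i - x i * y j) * a by noncomm_ring]
      refine add_mem (mul_mem_orderedSpan_left (subset_adjoin ⟨i, hi, rfl⟩) ih) ?_
      suffices ∀ c ∈ orderedSpan R x y (Iio i) (Iio j),
          c * a ∈ orderedSpan R x y I (Iic j) from
        this _ (reorder (isLowerSet_Iio i) (hcom i j))
      intro c hc
      induction hc using Submodule.mul_induction_on' with
      | mem_mul_mem p hp q hq =>
        have hqa : q * a ∈ orderedSpan R x y I (Iio j) := reorder hI
          (mul_mem (adjoin_mono subset_union_right hq) (adjoin_mono subset_union_left ha'))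
        rw [mul_assoc]
        exact orderedSpan_mono subset_rfl Iio_subset_Iic_self
          (mul_mem_orderedSpan_left (adjoin_mono (image_mono (hI.Iio_subset hi)) hp) hqa)
      | add c _ d _ hc hd => rw [add_mul]; exact add_mem hc hd
  | zero => simp
  | add a b _ _ ha hb => rw [mul_add]; exact add_mem ha hb
  | smul r a _ ha => rw [mul_smul_comm]; exact Submodule.smul_mem _ r ha

theorem toSubmodule_adjoin_union_eq_orderedSpan
    (hcom : ∀ i j, y j * x i - x i * y j ∈ adjoin R (x '' Iio i ∪ y '' Iio j))
    (hI : IsLowerSet I) (hJ : IsLowerSet J) :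
    toSubmodule (adjoin R (x '' I ∪ y '' J)) = orderedSpan R x y I J := by
  refine le_antisymm (fun z hz => mem_orderedSpan_of_mem_adjoin_union hJ
    (fun j _ _ ha => mul_mem_orderedSpan_Iic hcom j hI ha) hz) ?_
  rw [orderedSpan, adjoin_union]
  exact mul_toSubmodule_le _ _

end OrderedSpan

section OrderedMonomials

variable {M : Type*} [Monoid M]

theorem List.prod_map_pow_add {ι : Type*} {z : ι → M} (hz : ∀ i i', Commute (z i) (z i'))
    (l : List ι) (a b : ι → ℕ) :
    (l.map fun i => z i ^ (a i + b i)).prod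
      = (l.map fun i => z i ^ a i).prod * (l.map fun i => z i ^ b i).prod := by
  induction l with
  | nil => simp
  | cons i l ih =>
    have hcomm : Commute (z i ^ b i) (l.map fun i => z i ^ a i).prod :=
      Commute.list_prod_right _ _ (by simpa using fun i' _ => (hz i i').pow_pow _ _)
    simp only [List.map_cons, List.prod_cons]
    rw [ih, pow_add]
    simp only [mul_assoc]
    rw [hcomm.left_comm]

theorem exists_prod_map_pow_eq_of_mem_closure {m : ℕ} {x : Fin m → M}
    (hx : ∀ i i', Commute (x i) (x i')) {I : Set (Fin m)} {a : M}
    (ha : a ∈ Submonoid.closure (x '' I)) :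
    ∃ e : Fin m → ℕ, (∀ i, e i ≠ 0 → i ∈ I) ∧
      ((List.finRange m).map fun i => x i ^ e i).prod = a := by
  classical
  induction ha using Submonoid.closure_induction with
  | mem _ h =>
    obtain ⟨i, hi, rfl⟩ := h
    refine ⟨Pi.single i 1, fun i' h => ?_, ?_⟩
    · obtain rfl : i' = i := by_contra fun hne => h (Pi.single_eq_of_ne hne 1)
      exact hi
    · rw [List.prod_map_eq_pow_single i _ fun i' hne _ => by simp [Pi.single_eq_of_ne hne],
        List.count_finRange]
      simp
  | one => exact ⟨0, fun i h => absurd rfl h, by simp⟩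
  | mul _ _ _ _ ha hb =>
    obtain ⟨e, he, rfl⟩ := ha
    obtain ⟨f, hf, rfl⟩ := hb
    refine ⟨e + f, fun i h => ?_, List.prod_map_pow_add hx _ e f⟩
    by_cases h0 : e i = 0
    · exact hf i (by simpa [h0] using h)
    · exact he i h0

theorem ordProd_eq_prod_map {σ : Type*} [LinearOrder σ] (x : σ → M) (e : σ →₀ ℕ)
    {L : List σ} (hL : L.SortedLT) (he : ∀ i ∈ e.support, i ∈ L) :
    ordProd x e = (L.map fun i => x i ^ e i).prod := by
  classical
  have hsort : e.support.sort (· ≤ ·) = L.filter (· ∈ e.support) :=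
    e.support.sortedLT_sort.eq_of_mem_iff (hL.pairwise.filter _).sortedLT
      fun i => by simpa using fun h => he i h
  rw [ordProd, hsort]
  clear hsort he hL
  induction L with
  | nil => rfl
  | cons i L ih => by_cases h : i ∈ e.support <;> simp_all

theorem ordProd_sumElim {m n : ℕ} (x : Fin m → M) (y : Fin n → M) (e : Fin m → ℕ)
    (f : Fin n → ℕ) :
    ordProd (fun v => Sum.elim x y (ofLex v))
        (Finsupp.equivFunOnFinite.symm fun v => Sum.elim e f (ofLex v))
      = ((List.finRange m).map fun i => x i ^ e i).prod
        * ((List.finRange n).map fun j => y j ^ f j).prod := by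
  have hL : ((List.finRange m).map (toLex ∘ Sum.inl) ++ (List.finRange n).map (toLex ∘ Sum.inr)
      : List (Fin m ⊕ₗ Fin n)).SortedLT := by
    refine List.Pairwise.sortedLT ?_
    simpa [List.pairwise_append, List.pairwise_map] using
      ⟨(List.sortedLT_finRange m).pairwise, (List.sortedLT_finRange n).pairwise⟩
  rw [ordProd_eq_prod_map _ _ hL fun v _ => ?_]
  · simp [Function.comp_def]
  · obtain ⟨i | j, rfl⟩ := toLex.surjective v <;> simp

end OrderedMonomials

theorem pEval_eq_constr {σ R A : Type*} [LinearOrder σ] [CommSemiring R] [Semiring A]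
    [Algebra R A] (x : σ → A) (q : MvPolynomial σ R) :
    pEval x q = (MvPolynomial.basisMonomials σ R).constr R (ordProd x) q := by
  rw [Module.Basis.constr_apply, pEval, MvPolynomial.sum_def]
  rfl

section CommutingFamilies

variable {R A : Type*} [CommSemiring R] [Ring A] [Algebra R A] {m n : ℕ}
  {x : Fin m → A} {y : Fin n → A}

theorem orderedSpan_le_span_prod_pow (hx : ∀ i i', Commute (x i) (x i'))
    (hy : ∀ j j', Commute (y j) (y j')) (I : Set (Fin m)) (J : Set (Fin n)) :
    orderedSpan R x y I J ≤ Submodule.span R {a | ∃ (e : Fin m → ℕ) (f : Fin n → ℕ),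
      (∀ i, e i ≠ 0 → i ∈ I) ∧ (∀ j, f j ≠ 0 → j ∈ J) ∧
      ((List.finRange m).map fun i => x i ^ e i).prod
        * ((List.finRange n).map fun j => y j ^ f j).prod = a} := by
  rw [orderedSpan, adjoin_eq_span, adjoin_eq_span, Submodule.span_mul_span]
  refine Submodule.span_mono ?_
  rintro _ ⟨a, ha, b, hb, rfl⟩
  obtain ⟨e, he, rfl⟩ := exists_prod_map_pow_eq_of_mem_closure hx ha
  obtain ⟨f, hf, rfl⟩ := exists_prod_map_pow_eq_of_mem_closure hy hb
  exact ⟨e, f, he, hf, rfl⟩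

theorem exists_mem_supported_pEval_eq (hx : ∀ i i', Commute (x i) (x i'))
    (hy : ∀ j j', Commute (y j) (y j')) {I : Set (Fin m)} {J : Set (Fin n)} {c : A}
    (hc : c ∈ orderedSpan R x y I J) :
    ∃ q ∈ MvPolynomial.supported R
        {v | (∃ i ∈ I, ofLex v = Sum.inl i) ∨ (∃ j ∈ J, ofLex v = Sum.inr j)},
      pEval (fun v => Sum.elim x y (ofLex v)) q = c := by
  let eval := (MvPolynomial.basisMonomials (Fin m ⊕ₗ Fin n) R).constr R
    (ordProd fun v => Sum.elim x y (ofLex v))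
  suffices c ∈ (toSubmodule (MvPolynomial.supported R _)).map eval by
    obtain ⟨q, hq, rfl⟩ := this
    exact ⟨q, hq, pEval_eq_constr _ q⟩
  refine Submodule.span_le.2 ?_ (orderedSpan_le_span_prod_pow hx hy I J hc)
  rintro _ ⟨e, f, he, hf, rfl⟩
  let E : Fin m ⊕ₗ Fin n →₀ ℕ :=
    Finsupp.equivFunOnFinite.symm fun v => Sum.elim e f (ofLex v)
  refine ⟨MvPolynomial.monomial E 1, ?_, ?_⟩
  · rw [SetLike.mem_coe, mem_toSubmodule, MvPolynomial.mem_supported]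
    intro v hv
    obtain ⟨d, hd, hvd⟩ := (MvPolynomial.mem_vars_iff_mem_support v).1 hv
    rw [Finset.mem_singleton.1 (MvPolynomial.support_monomial_subset hd),
      Finsupp.mem_support_iff] at hvd
    obtain ⟨i | j, rfl⟩ := toLex.surjective v
    · exact Or.inl ⟨i, he i (by simpa [E] using hvd), rfl⟩
    · exact Or.inr ⟨j, hf j (by simpa [E] using hvd), rfl⟩
  · have := (MvPolynomial.basisMonomials (Fin m ⊕ₗ Fin n) R).constr_basis R
      (ordProd fun v => Sum.elim x y (ofLex v)) E
    rw [MvPolynomial.coe_basisMonomials, ordProd_sumElim] at this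
    exact this

end CommutingFamilies

/-- Let `R` be a commutative ring and `C` an `R`-algebra generated by `x_1,…,x_m` and
`y_1,…,y_n` such that the `x_i` pairwise commute, the `y_j` pairwise commute, and
`[y_j, x_i]` lies in the subalgebra generated by `x_1,…,x_{i−1}, y_1,…,y_{j−1}`.
Then (1) `C` is spanned as an `R`-module by the ordered monomials
`x_1^{a_1}⋯x_m^{a_m} y_1^{b_1}⋯y_n^{b_n}`, and (2) for each `i, j` there is a polynomial
`c_{i,j} ∈ R[X_1,…,X_{i−1}][Y_1,…,Y_{j−1}]` with
`[y_j, x_i] = c_{i,j}(x_1,…,x_{i−1}, y_1,…,y_{j−1})`. -/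
theorem spanning_monomials_and_commutator_polys
    {R : Type*} [CommRing R] {C : Type*} [Ring C] [Algebra R C]
    (m n : ℕ) (x : Fin m → C) (y : Fin n → C)
    (hgen : Algebra.adjoin R (Set.range x ∪ Set.range y) = ⊤)
    (hx : ∀ i i', Commute (x i) (x i'))
    (hy : ∀ j j', Commute (y j) (y j'))
    (hcom : ∀ i j, y j * x i - x i * y j ∈
      Algebra.adjoin R
        ({a | ∃ i' : Fin m, i' < i ∧ a = x i'} ∪ {a | ∃ j' : Fin n, j' < j ∧ a = y j'})) :
    Submodule.span R {a | ∃ (e : Fin m → ℕ) (f : Fin n → ℕ),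
        a = (((List.finRange m).map fun i => x i ^ e i).prod) *
            (((List.finRange n).map fun j => y j ^ f j).prod)} = ⊤ ∧
    ∀ i j, ∃ q : MvPolynomial (Fin m ⊕ₗ Fin n) R,
      (∀ v ∈ q.vars,
        (∃ i' : Fin m, i' < i ∧ ofLex v = Sum.inl i') ∨
        (∃ j' : Fin n, j' < j ∧ ofLex v = Sum.inr j')) ∧
      pEval (fun v => Sum.elim x y (ofLex v)) q = y j * x i - x i * y j := by
  have hcomm : ∀ i j, y j * x i - x i * y j ∈ adjoin R (x '' Iio i ∪ y '' Iio j) := by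
    intro i j
    convert hcom i j using 3 <;> ext <;> simp [eq_comm]
  have hspan : ∀ {I J}, IsLowerSet I → IsLowerSet J → ∀ {z : C},
      z ∈ adjoin R (x '' I ∪ y '' J) → z ∈ orderedSpan R x y I J := fun hI hJ z hz => by
    rwa [← toSubmodule_adjoin_union_eq_orderedSpan hcomm hI hJ]
  refine ⟨eq_top_iff.2 fun z _ => ?_, fun i j => ?_⟩
  · have hz : z ∈ adjoin R (x '' univ ∪ y '' univ) := by
      rw [image_univ, image_univ, hgen]
      trivial
    refine Submodule.span_mono ?_
      (orderedSpan_le_span_prod_pow hx hy _ _ (hspan isLowerSet_univ isLowerSet_univ hz))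
    rintro _ ⟨e, f, -, -, rfl⟩
    exact ⟨e, f, rfl⟩
  · obtain ⟨q, hq, hqc⟩ := exists_mem_supported_pEval_eq hx hy
      (hspan (isLowerSet_Iio i) (isLowerSet_Iio j) (hcomm i j))
    exact ⟨q, fun v hv => MvPolynomial.mem_supported.1 hq hv, hqc⟩

end
end

section
/- Fix a prime p and a commutative ring R. Let F_n ∈ ℤ[X_0,…,X_n] (n ≥ 0) be the p-typical Frobenius polynomials, characterized by w_i(F_0, F_1, …) = w_{i+1}(X_0, X_1, …) for all i ≥ 0, where w_i(X) = ∑_{k=0}^{i} p^k X_k^{p^{i−k}} is the i-th p-typical Witt (ghost) polynomial. Then the R-algebra endomorphism of the polynomial ring R[X_0, X_1, X_2, …] sending X_n ↦ F_n for every n is injective; equivalently, the images of the monomials under this substitution are R-linearly independent. -/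
open MvPolynomial

/-!
Write `ψ` for the substitution `X_n ↦ F_n`. Once `p` is inverted, the ghost polynomials form a
change of variables that conjugates `ψ` into the injective shift `X_i ↦ X_{i+1}`; so `ψ Φ = 0`
forces every coefficient of `Φ` to be killed by a power of `p`. On the other hand
`F_n ≡ X_n ^ p [mod p]`, so `ψ Φ ≡ Φ(X_0 ^ p, X_1 ^ p, …)` modulo `p • I`, where `I` is the finitely
generated ideal of coefficients of `Φ`. If `ψ Φ = 0` this gives `I ≤ p • I`, and Nakayama provides
`x ≡ 1 [mod p]` with `x • I = 0`. Since `x` is coprime to every power of `p`, `I = 0`.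
-/

namespace MvPolynomial

section Ghost

variable {p : ℕ} {R : Type*} [CommRing R] [Invertible (p : R)]

theorem bind₁_wittPolynomial_bind₁_xInTermsOfW (φ : MvPolynomial ℕ R) :
    bind₁ (wittPolynomial p R) (bind₁ (xInTermsOfW p R) φ) = φ := by
  rw [bind₁_bind₁]
  simp only [bind₁_wittPolynomial_xInTermsOfW]
  exact aeval_X_left_apply φ

theorem bind₁_xInTermsOfW_bind₁_eq_rename_succ {G : ℕ → MvPolynomial ℕ R}
    (hG : ∀ i, bind₁ G (wittPolynomial p R i) = wittPolynomial p R (i + 1))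
    (φ : MvPolynomial ℕ R) :
    bind₁ (xInTermsOfW p R) (bind₁ G φ) = rename Nat.succ (bind₁ (xInTermsOfW p R) φ) := by
  conv_lhs => rw [← bind₁_wittPolynomial_bind₁_xInTermsOfW (p := p) φ, bind₁_bind₁ _ G]
  simp only [hG]
  rw [bind₁_bind₁]
  simp only [bind₁_xInTermsOfW_wittPolynomial]
  exact (bind₁_rename X Nat.succ _).symm.trans (aeval_X_left_apply _)

theorem bind₁_injective_of_bind₁_wittPolynomial_eq_succ {G : ℕ → MvPolynomial ℕ R}
    (hG : ∀ i, bind₁ G (wittPolynomial p R i) = wittPolynomial p R (i + 1)) :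
    Function.Injective (bind₁ G) := by
  intro a b hab
  have h := congrArg (bind₁ (xInTermsOfW p R)) hab
  simp only [bind₁_xInTermsOfW_bind₁_eq_rename_succ hG] at h
  have h' := congrArg (bind₁ (wittPolynomial p R)) (rename_injective _ Nat.succ_injective h)
  simpa only [bind₁_wittPolynomial_bind₁_xInTermsOfW] using h'

end Ghost

section Expand

variable {σ R : Type*} [CommRing R]

theorem coeff_mem_span_coeffs (φ : MvPolynomial σ R) (m : σ →₀ ℕ) :
    coeff m φ ∈ Ideal.span (φ.coeffs : Set R) := by
  by_cases h : coeff m φ = 0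
  · rw [h]
    exact zero_mem _
  · exact Ideal.subset_span (coeff_mem_coeffs m h)

theorem bind₁_sub_expand_mem_map_C {J : Ideal R} {n : ℕ} {f : σ → MvPolynomial σ R}
    (hf : ∀ i, f i - X i ^ n ∈ J.map C) (φ : MvPolynomial σ R) :
    bind₁ f φ - expand n φ ∈ J.map C := by
  have h : (Ideal.Quotient.mkₐ R (J.map C)).comp (bind₁ f) =
      (Ideal.Quotient.mkₐ R (J.map C)).comp (expand n) := by
    refine algHom_ext fun i => ?_
    simp only [AlgHom.comp_apply, bind₁_X_right, expand_X, Ideal.Quotient.mkₐ_eq_mk]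
    exact Ideal.Quotient.eq.mpr (hf i)
  exact Ideal.Quotient.eq.mp (DFunLike.congr_fun h φ)

theorem bind₁_sub_expand_mem_map_C_mul {J I : Ideal R} {n : ℕ} {f : σ → MvPolynomial σ R}
    (hf : ∀ i, f i - X i ^ n ∈ J.map C) {φ : MvPolynomial σ R} (hφ : ∀ m, coeff m φ ∈ I) :
    bind₁ f φ - expand n φ ∈ (J * I).map C := by
  rw [φ.as_sum, map_sum, map_sum, ← Finset.sum_sub_distrib, Ideal.map_mul]
  refine Ideal.sum_mem _ fun d _ => ?_
  rw [← mul_one (coeff d φ), ← C_mul_monomial, map_mul, map_mul, bind₁_C_right, expand_C,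
    ← mul_sub, mul_comm (C _)]
  exact Ideal.mul_mem_mul (bind₁_sub_expand_mem_map_C hf _) (Ideal.mem_map_of_mem C (hφ d))

theorem span_coeffs_le_mul_of_bind₁_eq_zero {J : Ideal R} {n : ℕ} (hn : n ≠ 0)
    {f : σ → MvPolynomial σ R} (hf : ∀ i, f i - X i ^ n ∈ J.map C) {φ : MvPolynomial σ R}
    (hφ : bind₁ f φ = 0) :
    Ideal.span (φ.coeffs : Set R) ≤ J * Ideal.span (φ.coeffs : Set R) := by
  refine Ideal.span_le.mpr fun c hc => ?_
  obtain ⟨m, -, rfl⟩ := mem_coeffs_iff.mp hc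
  have h := mem_map_C_iff.mp
    (bind₁_sub_expand_mem_map_C_mul hf (coeff_mem_span_coeffs φ)) (n • m)
  rwa [hφ, zero_sub, coeff_neg, coeff_expand_smul _ hn, neg_mem_iff] at h

end Expand

end MvPolynomial

theorem Ideal.eq_bot_of_le_span_singleton_mul {R : Type*} [CommRing R] {r : R} {I : Ideal R}
    (S : Type*) [CommRing S] [Algebra R S] [IsLocalization.Away r S] (hI : I.FG)
    (hle : I ≤ Ideal.span {r} * I) (hker : I ≤ RingHom.ker (algebraMap R S)) : I = ⊥ := by
  obtain ⟨x, hx1, hx⟩ :=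
    Submodule.exists_sub_one_mem_and_smul_eq_zero_of_fg_of_le_smul _ I hI hle
  obtain ⟨a, ha⟩ := Ideal.mem_span_singleton'.mp hx1
  have hcop : IsCoprime x r := ⟨1, -a, by linear_combination -ha⟩
  refine (Submodule.eq_bot_iff _).mpr fun c hc => ?_
  obtain ⟨⟨_, k, rfl⟩, hk⟩ :=
    (IsLocalization.map_eq_zero_iff (Submonoid.powers r) S c).mp (hker hc)
  obtain ⟨u, v, huv⟩ := hcop.pow_right (n := k)
  calc c = u * (x • c) + v * (r ^ k * c) := by
        rw [smul_eq_mul]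
        linear_combination (-c) * huv
    _ = 0 := by rw [hx c hc, hk, mul_zero, mul_zero, add_zero]

theorem MvPolynomial.bind₁_injective_of_sub_X_pow_mem {σ R : Type*} [CommRing R] {r : R}
    {n : ℕ} (hn : n ≠ 0) (S : Type*) [CommRing S] [Algebra R S] [IsLocalization.Away r S]
    {f : σ → MvPolynomial σ R} (hf : ∀ i, f i - X i ^ n ∈ (Ideal.span {r}).map C)
    (hS : Function.Injective (bind₁ fun i => map (algebraMap R S) (f i))) :
    Function.Injective (bind₁ f) := by
  refine (injective_iff_map_eq_zero _).mpr fun φ hφ => ?_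
  have hφS : map (algebraMap R S) φ = 0 := hS (by rw [← map_bind₁, hφ, map_zero, map_zero])
  have hker : Ideal.span (φ.coeffs : Set R) ≤ RingHom.ker (algebraMap R S) := by
    refine Ideal.span_le.mpr fun c hc => ?_
    obtain ⟨m, -, rfl⟩ := mem_coeffs_iff.mp hc
    rw [SetLike.mem_coe, RingHom.mem_ker, ← coeff_map, hφS, coeff_zero]
  have hbot := Ideal.eq_bot_of_le_span_singleton_mul S (Submodule.fg_span φ.coeffs.finite_toSet)
    (span_coeffs_le_mul_of_bind₁_eq_zero hn hf hφ) hker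
  ext m
  exact (Submodule.eq_bot_iff _).mp hbot _ (coeff_mem_span_coeffs φ m)

namespace WittVector

variable (p : ℕ) (R : Type*) [CommRing R]

theorem map_frobeniusPoly_sub_X_pow_mem (i : ℕ) :
    MvPolynomial.map (Int.castRingHom R) (frobeniusPoly p i) - X i ^ p ∈
      (Ideal.span {(p : R)}).map C := by
  rw [frobeniusPoly, map_add, map_mul, map_pow, map_X, map_C, eq_intCast, Int.cast_natCast,
    add_sub_cancel_left]
  exact Ideal.mul_mem_right _ _ (Ideal.mem_map_of_mem C (Ideal.mem_span_singleton_self _))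

theorem bind₁_map_frobeniusPoly_injective [Fact p.Prime] [Invertible (p : R)] :
    Function.Injective
      (bind₁ fun n => MvPolynomial.map (Int.castRingHom R) (frobeniusPoly p n)) :=
  bind₁_injective_of_bind₁_wittPolynomial_eq_succ fun i => by
    simpa only [map_bind₁, map_wittPolynomial] using
      congrArg (MvPolynomial.map (Int.castRingHom R)) (bind₁_frobeniusPoly_wittPolynomial p i)

end WittVector

/-- Fix a prime `p` and a commutative ring `R`. Let `F_n ∈ ℤ[X_0,…,X_n]` (`n ≥ 0`) be the
`p`-typical Frobenius polynomials, characterized by `w_i(F_0, F_1, …) = w_{i+1}(X_0, X_1, …)`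
for all `i ≥ 0`, where `w_i` is the `i`-th `p`-typical Witt (ghost) polynomial
`w_i(X) = ∑_{k ≤ i} p^k X_k^{p^{i−k}}`. Then the `R`-algebra endomorphism of
`R[X_0, X_1, …]` sending `X_n ↦ F_n` is injective. -/
theorem frobenius_substitution_injective (p : ℕ) (hp : p.Prime)
    (R : Type*) [CommRing R] (F : ℕ → MvPolynomial ℕ ℤ)
    (hF : ∀ i : ℕ, MvPolynomial.bind₁ F (wittPolynomial p ℤ i) = wittPolynomial p ℤ (i + 1)) :
    Function.Injective
      (MvPolynomial.bind₁ (fun n => (F n).map (Int.castRingHom R)) :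
        MvPolynomial ℕ R →ₐ[R] MvPolynomial ℕ R) := by
  have : Fact p.Prime := ⟨hp⟩
  obtain rfl : F = WittVector.frobeniusPoly p :=
    WittVector.poly_eq_of_wittPolynomial_bind_eq p _ _ fun i => by
      rw [hF, WittVector.bind₁_frobeniusPoly_wittPolynomial]
  let S := Localization.Away (p : R)
  have : Invertible (p : S) := IsUnit.invertible <| by
    simpa using IsLocalization.Away.algebraMap_isUnit (S := S) (p : R)
  refine bind₁_injective_of_sub_X_pow_mem hp.ne_zero S
    (WittVector.map_frobeniusPoly_sub_X_pow_mem p R) ?_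
  simpa only [map_map, RingHom.ext_int ((algebraMap R S).comp (Int.castRingHom R))
    (Int.castRingHom S)] using WittVector.bind₁_map_frobeniusPoly_injective p S
end
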